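/- arXiv:1309.4912 — 8 statements merged into one kernel-verified Lean document; each statement's English description precedes it below -/
import Mathlib

section
/- Let h : J → J be a continuous involution on an open interval J containing 0 with h(0) = 0 and h ≠ id. Then k(x) := x − h(x) is a strictly increasing homeomorphism from J onto an open interval I = k(J), and I is symmetric about 0 (y ∈ I implies −y ∈ I). -/
/-!
A continuous injective map of an interval is strictly monotone or strictly antitone, and a strictly
monotone involution is the identity (if `h z < z` then `z = h (h z) < h z`). Hence `h` is strictly
decreasing, `k = id - h` is strictly increasing and continuous, and it maps the open interval `J`
homeomorphically onto an open interval. Symmetry comes from `k (h x) = h x - x = -k x`.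
-/

open Set Function

section LinearOrder

variable {α : Type*} [LinearOrder α]

theorem StrictMonoOn.apply_eq_self_of_leftInvOn {f : α → α} {s : Set α} (hf : StrictMonoOn f s)
    (hinv : LeftInvOn f f s) {z : α} (hz : z ∈ s) (hfz : f z ∈ s) : f z = z := by
  rcases lt_trichotomy (f z) z with hlt | heq | hgt
  · have := hf hfz hz hlt
    rw [hinv hz] at this
    exact absurd (hlt.trans this) (lt_irrefl _)
  · exact heq
  · have := hf hz hfz hgt
    rw [hinv hz] at this
    exact absurd (this.trans hgt) (lt_irrefl _)

end LinearOrder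

section OrderTopology

variable {α β : Type*} [ConditionallyCompleteLinearOrder α] [TopologicalSpace α] [OrderTopology α]
  [DenselyOrdered α] [LinearOrder β] [TopologicalSpace β] [OrderTopology β]

theorem ContinuousOn.strictAntiOn_of_leftInvOn_self {f : α → α} {s : Set α} (hs : s.OrdConnected)
    (hf : ContinuousOn f s) (hmaps : MapsTo f s s) (hinv : LeftInvOn f f s)
    (hne : ∃ z ∈ s, f z ≠ z) : StrictAntiOn f s := by
  obtain ⟨z, hz, hfz⟩ := hne
  intro x hx y hy hxy
  set a := min x (min z (f z))
  set b := max y (max z (f z))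
  have hIcc : Icc a b ⊆ s :=
    hs.out (min_rec' (· ∈ s) hx (min_rec' (· ∈ s) hz (hmaps hz)))
      (max_rec' (· ∈ s) hy (max_rec' (· ∈ s) hz (hmaps hz)))
  have hxI : x ∈ Icc a b := ⟨min_le_left _ _, hxy.le.trans (le_max_left _ _)⟩
  have hyI : y ∈ Icc a b := ⟨(min_le_left _ _).trans hxy.le, le_max_left _ _⟩
  have hzI : z ∈ Icc a b := ⟨by simp [a], by simp [b]⟩
  have hfzI : f z ∈ Icc a b := ⟨by simp [a], by simp [b]⟩
  rcases (hf.mono hIcc).strictMonoOn_of_injOn_Icc' (hxI.1.trans hxI.2)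
      (hinv.injOn.mono hIcc) with hmono | hanti
  · exact absurd (hmono.apply_eq_self_of_leftInvOn (hinv.mono hIcc) hzI hfzI) hfz
  · exact hanti hxI hyI hxy

theorem ContinuousOn.isOpen_image_of_strictMonoOn [NoMinOrder α] [NoMaxOrder α] {f : α → β}
    {s : Set α} (hs : IsOpen s) (hf : ContinuousOn f s) (hmono : StrictMonoOn f s) :
    IsOpen (f '' s) := by
  rw [isOpen_iff_mem_nhds]
  rintro _ ⟨x, hx, rfl⟩
  obtain ⟨l, u, ⟨hlx, hxu⟩, hIoo⟩ := mem_nhds_iff_exists_Ioo_subset.1 (hs.mem_nhds hx)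
  obtain ⟨a, hla, hax⟩ := exists_between hlx
  obtain ⟨b, hxb, hbu⟩ := exists_between hxu
  have hIcc : Icc a b ⊆ s := (Icc_subset_Ioo hla hbu).trans hIoo
  have himage : f '' Ioo a b = Ioo (f a) (f b) :=
    (hf.mono hIcc).image_Ioo_of_strictMonoOn (hax.trans hxb).le (hmono.mono hIcc)
  refine Filter.mem_of_superset (Ioo_mem_nhds (hmono (hIcc ⟨le_rfl, (hax.trans hxb).le⟩) hx hax)
    (hmono hx (hIcc ⟨(hax.trans hxb).le, le_rfl⟩) hxb)) ?_
  rw [← himage]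
  exact image_mono (Ioo_subset_Icc_self.trans hIcc)

theorem StrictMonoOn.continuousOn_invFunOn [Nonempty α] {f : α → β} {s : Set α} (hs : IsOpen s)
    (hf : StrictMonoOn f s) (hfs : IsOpen (f '' s)) : ContinuousOn (invFunOn f s) (f '' s) := by
  have hleft : LeftInvOn (invFunOn f s) f s := hf.injOn.leftInvOn_invFunOn
  have hmono : StrictMonoOn (invFunOn f s) (f '' s) := by
    rintro _ ⟨a, ha, rfl⟩ _ ⟨b, hb, rfl⟩ hab
    rw [hleft ha, hleft hb]
    exact (hf.lt_iff_lt ha hb).1 hab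
  rintro _ ⟨x, hx, rfl⟩
  refine (hmono.continuousAt_of_image_mem_nhds (hfs.mem_nhds ⟨x, hx, rfl⟩) ?_).continuousWithinAt
  rw [hf.injOn.invFunOn_image Subset.rfl, hleft hx]
  exact hs.mem_nhds hx

end OrderTopology

theorem involution_k_homeomorphism_general
    (J : Set ℝ) (hJopen : IsOpen J) (hJconn : J.OrdConnected)
    (h : ℝ → ℝ) (hmaps : Set.MapsTo h J J)
    (hcont : ContinuousOn h J)
    (hinv : ∀ x ∈ J, h (h x) = x)
    (hne : ∃ x ∈ J, h x ≠ x)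
    (k : ℝ → ℝ) (hk : ∀ x, k x = x - h x) :
    StrictMonoOn k J ∧ ContinuousOn k J ∧ IsOpen (k '' J) ∧ (k '' J).OrdConnected ∧
    (∃ g : ℝ → ℝ, ContinuousOn g (k '' J) ∧ (∀ x ∈ J, g (k x) = x) ∧ ∀ y ∈ k '' J, k (g y) = y) ∧
    (∀ y ∈ k '' J, -y ∈ k '' J) := by
  obtain rfl : k = fun x => x - h x := funext hk
  have hanti : StrictAntiOn h J := hcont.strictAntiOn_of_leftInvOn_self hJconn hmaps hinv hne
  have hkmono : StrictMonoOn (fun x => x - h x) J := fun a ha b hb hab => by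
    linarith [hanti ha hb hab]
  have hkcont : ContinuousOn (fun x => x - h x) J := continuousOn_id.sub hcont
  have hkopen := hkcont.isOpen_image_of_strictMonoOn hJopen hkmono
  have hleft := hkmono.injOn.leftInvOn_invFunOn
  refine ⟨hkmono, hkcont, hkopen,
    isPreconnected_iff_ordConnected.1 (hJconn.isPreconnected.image _ hkcont),
    ⟨_, hkmono.continuousOn_invFunOn hJopen hkopen, fun x hx => hleft hx,
      fun y hy => hleft.rightInvOn_image hy⟩, ?_⟩
  rintro _ ⟨x, hx, rfl⟩
  exact ⟨h x, hmaps hx, by simp only [hinv x hx, neg_sub]⟩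

theorem involution_k_homeomorphism
    (J : Set ℝ) (hJopen : IsOpen J) (hJconn : J.OrdConnected) (h0J : (0:ℝ) ∈ J)
    (h : ℝ → ℝ) (hmaps : Set.MapsTo h J J)
    (hcont : ContinuousOn h J)
    (hinv : ∀ x ∈ J, h (h x) = x)
    (h0 : h 0 = 0)
    (hne : ∃ x ∈ J, h x ≠ x)
    (k : ℝ → ℝ) (hk : ∀ x, k x = x - h x) :
    StrictMonoOn k J ∧ ContinuousOn k J ∧ IsOpen (k '' J) ∧ (k '' J).OrdConnected ∧
    (∃ g : ℝ → ℝ, ContinuousOn g (k '' J) ∧ (∀ x ∈ J, g (k x) = x) ∧ ∀ y ∈ k '' J, k (g y) = y) ∧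
    (∀ y ∈ k '' J, -y ∈ k '' J) :=
  involution_k_homeomorphism_general J hJopen hJconn h hmaps hcont hinv hne k hk
end

section
/- Let h : J → J be a continuous involution on an open interval J ∋ 0 with h(0) = 0, h ≠ id, and let k(x) = x − h(x), I = k(J). Then the function P : I → ℝ defined by P(y) = 2 k⁻¹(y) − y satisfies P(0) = 0 and P(−y) = P(y) for all y ∈ I. -/
/-!
Writing `y = k x`, the involution gives `k (h x) = -k x`, so `k⁻¹ (-y) = h x`; hence both
`P y = 2 x - (x - h x)` and `P (-y) = 2 h x + (x - h x)` equal `x + h x`.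
-/

theorem sub_apply_eq_neg_sub_of_apply_apply {G : Type*} [AddCommGroup G] {h : G → G} {x : G}
    (hx : h (h x) = x) : h x - h (h x) = -(x - h x) := by
  rw [hx, neg_sub]

theorem involution_P_even_general
    (J : Set ℝ) (h0J : (0:ℝ) ∈ J)
    (h : ℝ → ℝ) (hmaps : Set.MapsTo h J J)
    (hinv : ∀ x ∈ J, h (h x) = x)
    (h0 : h 0 = 0)
    (k kinv : ℝ → ℝ) (hk : ∀ x, k x = x - h x)
    (hkinv_left : ∀ x ∈ J, kinv (k x) = x)
    (P : ℝ → ℝ) (hP : ∀ y, P y = 2 * kinv y - y) :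
    P 0 = 0 ∧ ∀ y ∈ k '' J, P (-y) = P y := by
  have hk0 : k 0 = 0 := by rw [hk, h0, sub_zero]
  have hkinv0 : kinv 0 = 0 := by simpa only [hk0] using hkinv_left 0 h0J
  refine ⟨by rw [hP, hkinv0]; ring, ?_⟩
  rintro _ ⟨x, hxJ, rfl⟩
  have hk_h : k (h x) = -k x := by
    rw [hk, hk, sub_apply_eq_neg_sub_of_apply_apply (hinv x hxJ)]
  rw [hP, hP, ← hk_h, hkinv_left _ (hmaps hxJ), hkinv_left x hxJ, hk_h, hk x]
  ring

theorem involution_P_even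
    (J : Set ℝ) (hJopen : IsOpen J) (hJconn : J.OrdConnected) (h0J : (0:ℝ) ∈ J)
    (h : ℝ → ℝ) (hmaps : Set.MapsTo h J J)
    (hcont : ContinuousOn h J)
    (hinv : ∀ x ∈ J, h (h x) = x)
    (h0 : h 0 = 0)
    (hne : ∃ x ∈ J, h x ≠ x)
    (k kinv : ℝ → ℝ) (hk : ∀ x, k x = x - h x)
    (hkinv_maps : Set.MapsTo kinv (k '' J) J)
    (hkinv_left : ∀ x ∈ J, kinv (k x) = x)
    (hkinv_right : ∀ y ∈ k '' J, k (kinv y) = y)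
    (P : ℝ → ℝ) (hP : ∀ y, P y = 2 * kinv y - y) :
    P 0 = 0 ∧ ∀ y ∈ k '' J, P (-y) = P y :=
  involution_P_even_general J h0J h hmaps hinv h0 k kinv hk hkinv_left P hP
end

section
/- Let P : I → ℝ be a continuous even function on a symmetric open interval I with P(0) = 0, and suppose K(y) = (y + P(y))/2 is a homeomorphism from I onto an interval J. Then h(x) := x − K⁻¹(x) defines a continuous involution of J: h maps J onto J, h∘h = id, h(0) = 0, and h ≠ id. -/
/-!
Evenness of `P` gives `K y - y = (P y - y) / 2 = K (-y)`, so with `x = K y` we get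
`h (K y) = K y - y = K (-y)`: on `J = K '' I` the map `h` is the conjugate of `y ↦ -y` by `K`.
Everything follows: conjugates of involutions are involutions, and `h` moves `K y` for any
`y ≠ 0` in `I` because `K` is injective on `I`.
-/

open Set Filter Topology

section Semiconj

variable {α β : Type*} {s : Set α} {K : α → β} {σ : α → α} {h : β → β}

theorem mapsTo_image_of_semiconjOn (hσ : MapsTo σ s s) (hconj : ∀ y ∈ s, h (K y) = K (σ y)) :
    MapsTo h (K '' s) (K '' s) := by
  rintro _ ⟨y, hy, rfl⟩
  rw [hconj y hy]
  exact mem_image_of_mem K (hσ hy)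

theorem leftInvOn_image_of_semiconjOn (hσσ : LeftInvOn σ σ s) (hσ : MapsTo σ s s)
    (hconj : ∀ y ∈ s, h (K y) = K (σ y)) : LeftInvOn h h (K '' s) := by
  rintro _ ⟨y, hy, rfl⟩
  rw [hconj y hy, hconj (σ y) (hσ hy), hσσ hy]

theorem exists_ne_on_image_of_semiconjOn (hK : InjOn K s) (hσ : MapsTo σ s s)
    (hconj : ∀ y ∈ s, h (K y) = K (σ y)) {y : α} (hy : y ∈ s) (hσy : σ y ≠ y) :
    ∃ x ∈ K '' s, h x ≠ x :=
  ⟨K y, mem_image_of_mem K hy, by rw [hconj y hy]; exact hK.ne (hσ hy) hy hσy⟩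

end Semiconj

theorem half_add_sub_leftInverse_eq_neg {P K Kinv : ℝ → ℝ} (hK : ∀ y, K y = (y + P y) / 2)
    {y : ℝ} (hPy : P (-y) = P y) (hy : Kinv (K y) = y) : K y - Kinv (K y) = K (-y) := by
  rw [hy, hK, hK, hPy]
  ring

theorem even_P_gives_involution_general
    (I : Set ℝ) (hIopen : IsOpen I) (h0I : (0:ℝ) ∈ I)
    (hIsym : ∀ y ∈ I, -y ∈ I)
    (P : ℝ → ℝ)
    (hPeven : ∀ y ∈ I, P (-y) = P y) (hP0 : P 0 = 0)
    (K Kinv : ℝ → ℝ) (hK : ∀ y, K y = (y + P y) / 2)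
    (hKinv_cont : ContinuousOn Kinv (K '' I))
    (hKinv_left : ∀ y ∈ I, Kinv (K y) = y)
    (h : ℝ → ℝ) (hh : ∀ x, h x = x - Kinv x) :
    Set.MapsTo h (K '' I) (K '' I) ∧
    h '' (K '' I) = K '' I ∧
    ContinuousOn h (K '' I) ∧
    (∀ x ∈ K '' I, h (h x) = x) ∧
    h 0 = 0 ∧
    (∃ x ∈ K '' I, h x ≠ x) := by
  have hconj : ∀ y ∈ I, h (K y) = K (-y) := fun y hy => by
    rw [hh]
    exact half_add_sub_leftInverse_eq_neg hK (hPeven y hy) (hKinv_left y hy)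
  have hneg : MapsTo Neg.neg I I := hIsym
  have hmaps := mapsTo_image_of_semiconjOn hneg hconj
  have hinv := leftInvOn_image_of_semiconjOn (fun y _ => neg_neg y) hneg hconj
  obtain ⟨y, hyI, hy0⟩ :=
    ((eventually_nhdsWithin_of_eventually_nhds (hIopen.mem_nhds h0I)).and
      (self_mem_nhdsWithin : {(0:ℝ)}ᶜ ∈ 𝓝[≠] 0)).exists
  refine ⟨hmaps, (InvOn.bijOn ⟨hinv, hinv⟩ hmaps hmaps).image_eq,
    (continuousOn_id.sub hKinv_cont).congr fun x _ => hh x, hinv, ?_,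
    exists_ne_on_image_of_semiconjOn (LeftInvOn.injOn fun y hy => hKinv_left y hy) hneg hconj hyI
      (neg_ne_self.mpr hy0)⟩
  have hK0 : K 0 = 0 := by rw [hK, hP0]; norm_num
  simpa [hK0] using hconj 0 h0I

theorem even_P_gives_involution
    (I : Set ℝ) (hIopen : IsOpen I) (hIconn : I.OrdConnected) (h0I : (0:ℝ) ∈ I)
    (hIsym : ∀ y ∈ I, -y ∈ I)
    (P : ℝ → ℝ) (hPcont : ContinuousOn P I)
    (hPeven : ∀ y ∈ I, P (-y) = P y) (hP0 : P 0 = 0)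
    (K Kinv : ℝ → ℝ) (hK : ∀ y, K y = (y + P y) / 2)
    (hKinv_maps : Set.MapsTo Kinv (K '' I) I)
    (hKinv_cont : ContinuousOn Kinv (K '' I))
    (hKinv_left : ∀ y ∈ I, Kinv (K y) = y)
    (hKinv_right : ∀ x ∈ K '' I, K (Kinv x) = x)
    (h : ℝ → ℝ) (hh : ∀ x, h x = x - Kinv x) :
    Set.MapsTo h (K '' I) (K '' I) ∧
    h '' (K '' I) = K '' I ∧
    ContinuousOn h (K '' I) ∧
    (∀ x ∈ K '' I, h (h x) = x) ∧
    h 0 = 0 ∧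
    (∃ x ∈ K '' I, h x ≠ x) :=
  even_P_gives_involution_general I hIopen h0I hIsym P hPeven hP0 K Kinv hK hKinv_cont hKinv_left h
    hh
end

section
/- Let h : J → J be a continuous involution on an open interval J ∋ 0 with h(0) = 0, h ≠ id, and I = {x − h(x) : x ∈ J}. If inf J and sup J are both finite, then I = (inf J − sup J, sup J − inf J); otherwise I = ℝ. -/
/-!
A continuous involution `h ≠ id` of an interval is injective, hence strictly monotone, and an
increasing involution is the identity; so `h` is strictly decreasing. For `u, v ∈ J` the point
`w = max u (h v)` then satisfies `u - v ≤ w - h w`, and passing from `w` to `h w` negates `w - h w`.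
Since `x ↦ x - h x` maps `J` onto an interval inside `J - J` reaching below and above every
`u - v`, the image is `J - J`, which is `(inf J - sup J, sup J - inf J)` or `ℝ`.
-/

open Set
open scoped Pointwise

theorem MonotoneOn.apply_eq_self_of_apply_apply_eq_self {α : Type*} [LinearOrder α]
    {f : α → α} {s : Set α} (hf : MonotoneOn f s) {x : α} (hx : x ∈ s) (hfx : f x ∈ s)
    (hffx : f (f x) = x) : f x = x := by
  rcases le_total (f x) x with hle | hle
  · exact hle.antisymm (by simpa only [hffx] using hf hfx hx hle)
  · exact (by simpa only [hffx] using hf hx hfx hle : f x ≤ x).antisymm hle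

section

variable {α : Type*} [ConditionallyCompleteLinearOrder α] [TopologicalSpace α] [OrderTopology α]
  [DenselyOrdered α]

theorem strictAntiOn_of_leftInvOn_self {h : α → α} {J : Set α} (hJ : J.OrdConnected)
    (hmaps : MapsTo h J J) (hcont : ContinuousOn h J) (hinv : LeftInvOn h h J)
    (hne : ∃ x ∈ J, h x ≠ x) : StrictAntiOn h J := by
  obtain ⟨x₀, hx₀, hx₀_ne⟩ := hne
  intro x hx y hy hxy
  set a := min (min x y) (min x₀ (h x₀))
  set b := max (max x y) (max x₀ (h x₀))
  have hK : Icc a b ⊆ J := hJ.out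
    (min_rec' _ (min_rec' _ hx hy) (min_rec' _ hx₀ (hmaps hx₀)))
    (max_rec' _ (max_rec' _ hx hy) (max_rec' _ hx₀ (hmaps hx₀)))
  have hxK : x ∈ Icc a b := ⟨by simp [a], by simp [b]⟩
  have hyK : y ∈ Icc a b := ⟨by simp [a], by simp [b]⟩
  have hx₀K : x₀ ∈ Icc a b := ⟨by simp [a], by simp [b]⟩
  have hhx₀K : h x₀ ∈ Icc a b := ⟨by simp [a], by simp [b]⟩
  rcases (hcont.mono hK).strictMonoOn_of_injOn_Icc' (hxK.1.trans hxK.2)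
    (hinv.mono hK).injOn with hmono | hanti
  · exact absurd (hmono.monotoneOn.apply_eq_self_of_apply_apply_eq_self hx₀K hhx₀K
      (hinv hx₀)) hx₀_ne
  · exact hanti hxK hyK hxy

theorem IsOpen.eq_Ioo_csInf_csSup [NoMaxOrder α] [NoMinOrder α] {s : Set α} (hs : IsOpen s)
    (hc : IsConnected s) (hb : BddBelow s) (ha : BddAbove s) : s = Ioo (sInf s) (sSup s) := by
  refine Subset.antisymm (fun x hx => ⟨?_, ?_⟩) (hc.Ioo_csInf_csSup_subset hb ha)
  · obtain ⟨y, hyx, hy⟩ := (hs.eventually_mem hx).exists_lt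
    exact (csInf_le hb hy).trans_lt hyx
  · obtain ⟨y, hxy, hy⟩ := (hs.eventually_mem hx).exists_gt
    exact hxy.trans_le (le_csSup ha hy)

end

theorem Set.Ioo_sub_Ioo_self {K : Type*} [Field K] [LinearOrder K] [IsStrictOrderedRing K]
    (a b : K) : Ioo a b - Ioo a b = Ioo (a - b) (b - a) := by
  ext y
  constructor
  · rintro ⟨u, ⟨hau, hub⟩, v, ⟨hav, hvb⟩, rfl⟩
    constructor <;> linarith
  · rintro ⟨hy₁, hy₂⟩
    refine ⟨(a + b + y) / 2, ⟨by linarith, by linarith⟩, (a + b - y) / 2,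
      ⟨by linarith, by linarith⟩, by ring⟩

section

variable {α : Type*} [AddCommGroup α] [LinearOrder α] [IsOrderedAddMonoid α]

theorem not_bddAbove_sub_self {s : Set α} (hz : 0 ∈ s) (hs : ¬(BddBelow s ∧ BddAbove s)) :
    ¬BddAbove (s - s) := by
  rintro ⟨M, hM⟩
  refine hs ⟨⟨-M, fun v hv => ?_⟩, ⟨M, fun u hu => ?_⟩⟩
  · simpa [neg_le] using hM (sub_mem_sub hz hv)
  · simpa using hM (sub_mem_sub hu hz)

theorem not_bddBelow_sub_self {s : Set α} (hz : 0 ∈ s) (hs : ¬(BddBelow s ∧ BddAbove s)) :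
    ¬BddBelow (s - s) := by
  rintro ⟨m, hm⟩
  refine hs ⟨⟨m, fun v hv => ?_⟩, ⟨-m, fun u hu => ?_⟩⟩
  · simpa using hm (sub_mem_sub hv hz)
  · simpa [le_neg] using hm (sub_mem_sub hz hu)

theorem exists_sub_le_self_sub_apply {h : α → α} {J : Set α} (hanti : AntitoneOn h J)
    (hmaps : MapsTo h J J) (hinv : LeftInvOn h h J) {u v : α} (hu : u ∈ J) (hv : v ∈ J) :
    ∃ w ∈ J, u - v ≤ w - h w := by
  have hw : max u (h v) ∈ J := max_rec' _ hu (hmaps hv)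
  refine ⟨max u (h v), hw, sub_le_sub (le_max_left _ _) ?_⟩
  calc h (max u (h v)) ≤ h (h v) := hanti (hmaps hv) hw (le_max_right _ _)
    _ = v := hinv hv

theorem image_self_sub_apply_eq_sub {h : α → α} {J : Set α} (hanti : AntitoneOn h J)
    (hmaps : MapsTo h J J) (hinv : LeftInvOn h h J)
    (hconn : ((fun x => x - h x) '' J).OrdConnected) :
    (fun x => x - h x) '' J = J - J := by
  refine Subset.antisymm (image_subset_iff.2 fun x hx => sub_mem_sub hx (hmaps hx)) ?_
  rintro _ ⟨u, hu, v, hv, rfl⟩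
  obtain ⟨w₁, hw₁, hw₁_le⟩ := exists_sub_le_self_sub_apply hanti hmaps hinv hv hu
  obtain ⟨w₂, hw₂, hw₂_ge⟩ := exists_sub_le_self_sub_apply hanti hmaps hinv hu hv
  refine hconn.out (mem_image_of_mem _ (hmaps hw₁)) (mem_image_of_mem _ hw₂) ⟨?_, hw₂_ge⟩
  rw [hinv hw₁]
  simpa [neg_sub] using neg_le_neg hw₁_le

end

theorem involution_image_interval_general
    (J : Set ℝ) (hJopen : IsOpen J) (hJconn : J.OrdConnected) (h0J : (0:ℝ) ∈ J)
    (h : ℝ → ℝ) (hmaps : Set.MapsTo h J J)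
    (hcont : ContinuousOn h J)
    (hinv : ∀ x ∈ J, h (h x) = x)
    (hne : ∃ x ∈ J, h x ≠ x)
    (I : Set ℝ) (hI : I = (fun x => x - h x) '' J) :
    ((BddBelow J ∧ BddAbove J) → I = Set.Ioo (sInf J - sSup J) (sSup J - sInf J)) ∧
    (¬(BddBelow J ∧ BddAbove J) → I = Set.univ) := by
  have hanti := strictAntiOn_of_leftInvOn_self hJconn hmaps hcont hinv hne
  have hpre : IsPreconnected ((fun x => x - h x) '' J) :=
    hJconn.isPreconnected.image _ (continuousOn_id.sub hcont)
  have himage : (fun x => x - h x) '' J = J - J :=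
    image_self_sub_apply_eq_sub hanti.antitoneOn hmaps hinv hpre.ordConnected
  refine ⟨fun ⟨hb, ha⟩ => ?_, fun hJb => ?_⟩
  · have hJ : J = Ioo (sInf J) (sSup J) :=
      hJopen.eq_Ioo_csInf_csSup ⟨⟨0, h0J⟩, hJconn.isPreconnected⟩ hb ha
    rw [hI, himage, ← Set.Ioo_sub_Ioo_self, ← hJ]
  · rw [hI]
    exact hpre.eq_univ_of_unbounded (himage ▸ not_bddBelow_sub_self h0J hJb)
      (himage ▸ not_bddAbove_sub_self h0J hJb)

theorem involution_image_interval
    (J : Set ℝ) (hJopen : IsOpen J) (hJconn : J.OrdConnected) (h0J : (0:ℝ) ∈ J)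
    (h : ℝ → ℝ) (hmaps : Set.MapsTo h J J)
    (hcont : ContinuousOn h J)
    (hinv : ∀ x ∈ J, h (h x) = x)
    (h0 : h 0 = 0)
    (hne : ∃ x ∈ J, h x ≠ x)
    (I : Set ℝ) (hI : I = (fun x => x - h x) '' J) :
    ((BddBelow J ∧ BddAbove J) → I = Set.Ioo (sInf J - sSup J) (sSup J - sInf J)) ∧
    (¬(BddBelow J ∧ BddAbove J) → I = Set.univ) :=
  involution_image_interval_general J hJopen hJconn h0J h hmaps hcont hinv hne I hI
end

section
/- The function h(x) = x + 4 − 4√(1 + x) maps the interval (−1, 3) onto itself, satisfies h(h(x)) = x for all x ∈ (−1, 3), h(0) = 0, and h is not the identity. -/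
/-!
With `s = √(1 + x)` one has `h x = (2 - s)² - 1`, so `h` corresponds to the reflection
`s ↦ 2 - s` of `[0, 2]`. This reflection is an involution mapping `(0, 2)` onto itself and
fixing only `s = 1`, i.e. `x = 0`.
-/

open Set Real

noncomputable def sqrtInvolution (x : ℝ) : ℝ := x + 4 - 4 * √(1 + x)

theorem sqrtInvolution_eq_sq {x : ℝ} (hx : -1 ≤ x) :
    sqrtInvolution x = (2 - √(1 + x)) ^ 2 - 1 := by
  rw [sqrtInvolution, sub_sq, sq_sqrt (by linarith)]
  ring

theorem sqrt_one_add_sqrtInvolution {x : ℝ} (hx : x ∈ Icc (-1) 3) :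
    √(1 + sqrtInvolution x) = 2 - √(1 + x) := by
  have hs : √(1 + x) ≤ 2 := (sqrt_le_left zero_le_two).2 (by linarith [hx.2])
  rw [sqrtInvolution_eq_sq hx.1, add_sub_cancel, sqrt_sq (by linarith)]

theorem leftInvOn_sqrtInvolution : LeftInvOn sqrtInvolution sqrtInvolution (Icc (-1) 3) := by
  intro x hx
  rw [sqrtInvolution, sqrt_one_add_sqrtInvolution hx, sqrtInvolution_eq_sq hx.1]
  linear_combination sq_sqrt (by linarith [hx.1] : (0 : ℝ) ≤ 1 + x)

theorem mapsTo_sqrtInvolution : MapsTo sqrtInvolution (Ioo (-1) 3) (Ioo (-1) 3) := by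
  intro x hx
  have hs_pos : 0 < √(1 + x) := sqrt_pos.2 (by linarith [hx.1])
  have hs_lt : √(1 + x) < 2 := (sqrt_lt' zero_lt_two).2 (by linarith [hx.2])
  rw [mem_Ioo, sqrtInvolution_eq_sq hx.1.le]
  constructor <;> nlinarith

theorem sqrtInvolution_five_div_four : sqrtInvolution (5 / 4) = -3 / 4 := by
  rw [sqrtInvolution, show (1 : ℝ) + 5 / 4 = (3 / 2) ^ 2 by norm_num, sqrt_sq (by norm_num)]
  norm_num

theorem sqrt_involution_on_Ioo :
    Set.MapsTo (fun x => x + 4 - 4 * Real.sqrt (1 + x)) (Set.Ioo (-1:ℝ) 3) (Set.Ioo (-1:ℝ) 3) ∧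
    (fun x => x + 4 - 4 * Real.sqrt (1 + x)) '' (Set.Ioo (-1:ℝ) 3) = Set.Ioo (-1:ℝ) 3 ∧
    (∀ x ∈ Set.Ioo (-1:ℝ) 3,
      (fun x => x + 4 - 4 * Real.sqrt (1 + x)) ((fun x => x + 4 - 4 * Real.sqrt (1 + x)) x) = x) ∧
    ((0:ℝ) + 4 - 4 * Real.sqrt (1 + 0) = 0) ∧
    (∃ x ∈ Set.Ioo (-1:ℝ) 3, x + 4 - 4 * Real.sqrt (1 + x) ≠ x) := by
  have hinv : LeftInvOn sqrtInvolution sqrtInvolution (Ioo (-1) 3) :=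
    leftInvOn_sqrtInvolution.mono Ioo_subset_Icc_self
  refine ⟨mapsTo_sqrtInvolution, ?_, hinv, by norm_num, 5 / 4, by norm_num, ?_⟩
  · exact (InvOn.bijOn ⟨hinv, hinv⟩ mapsTo_sqrtInvolution mapsTo_sqrtInvolution).image_eq
  · change sqrtInvolution (5 / 4) ≠ 5 / 4
    rw [sqrtInvolution_five_div_four]
    norm_num
end

section
/- Let f : Ω → ℝ be C¹ on an open set Ω ⊆ ℝ² with (0,0) ∈ Ω, f(0,0) = 0, f symmetric (f(y,x) = f(x,y) whenever (x,y) ∈ Ω, and Ω is symmetric under swapping coordinates). Let Γ be the connected component of f⁻¹(0) containing (0,0), and suppose ∂₂f(x,y) ≠ 0 for all (x,y) ∈ Γ. Then Γ is the graph of a C¹ function h on an open interval J ∋ 0 with h(0) = 0, h'(x) < 0 on J, and h⁻¹ = h (i.e., Γ is the graph of a smooth involution). -/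
/-!
Near every point of `Γ` the implicit function theorem writes the zero set of `f` as the graph of a
continuous function of the first coordinate. Any two points of `Γ` then lie on one such graph over
an interval: the relation "lie on a common graph" is locally true, and it is transitive because two
graphs through a common point agree on their common interval (the set where they agree is open and
closed there), so they can be glued. Consequently the first projection is injective on `Γ`, and
`Γ` is the graph of a `C¹` function `h` over the interval `J`, its projection. The swap symmetry
of `f` makes `Γ` symmetric, i.e. `h` is an involution, so `h' (h x) * h' x = 1` and `h'` never
vanishes. At the origin, differentiating `f (t, h t) = 0` and using `∂₁f = ∂₂f` on the diagonal
gives `h' 0 = -1`, so `h' < 0` on the connected set `J`.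
-/

open Set Filter Topology
open scoped ContDiff

lemma ContinuousLinearMap.isInvertible_of_apply_one_ne_zero {𝕜 : Type*} [NontriviallyNormedField 𝕜]
    {L : 𝕜 →L[𝕜] 𝕜} (h : L 1 ≠ 0) : L.IsInvertible :=
  ⟨ContinuousLinearEquiv.unitsEquivAut 𝕜 (Units.mk0 _ h), by ext; simp⟩

lemma ContDiffAt.exists_implicit_contDiffAt {Ω : Set (ℝ × ℝ)} {f : ℝ × ℝ → ℝ} {p : ℝ × ℝ}
    (hf : ContDiffAt ℝ 1 f p) (hΩ : Ω ∈ 𝓝 p) (hfp : f p = 0) (hd : fderiv ℝ f p (0, 1) ≠ 0) :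
    ∃ ψ : ℝ → ℝ, ContDiffAt ℝ 1 ψ p.1 ∧ ∀ᶠ v in 𝓝 p, v ∈ {q ∈ Ω | f q = 0} ↔ v.2 = ψ v.1 := by
  have hinv : (fderiv ℝ f p ∘L .inr ℝ ℝ ℝ).IsInvertible :=
    ContinuousLinearMap.isInvertible_of_apply_one_ne_zero (by simpa using hd)
  refine ⟨hf.implicitFunction one_ne_zero hinv, hf.contDiffAt_implicitFunction one_ne_zero hinv, ?_⟩
  filter_upwards [hΩ, hf.eventually_apply_eq_iff_implicitFunction one_ne_zero hinv] with v hv hiff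
  rw [hfp] at hiff
  simp [hv, hiff, eq_comm]

section Branches

variable {Y : Type*} [TopologicalSpace Y]

def IsLocalGraphAt (S : Set (ℝ × Y)) (p : ℝ × Y) : Prop :=
  ∃ ψ : ℝ → Y, (∀ᶠ x in 𝓝 p.1, ContinuousAt ψ x) ∧ ∀ᶠ v in 𝓝 p, v ∈ S ↔ v.2 = ψ v.1

structure IsBranch (S : Set (ℝ × Y)) (I : Set ℝ) (g : ℝ → Y) : Prop where
  isOpen : IsOpen I
  ordConnected : I.OrdConnected
  continuousOn : ContinuousOn g I
  mem : ∀ t ∈ I, (t, g t) ∈ S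

variable {S : Set (ℝ × Y)}

lemma eventually_eq_of_eventually_mem_iff {ψ g : ℝ → Y} {x : ℝ} {l : Filter ℝ}
    (hψ : ∀ᶠ v in 𝓝 (x, g x), v ∈ S ↔ v.2 = ψ v.1)
    (hl : Tendsto (fun t ↦ (t, g t)) l (𝓝 (x, g x))) (hS : ∀ᶠ t in l, (t, g t) ∈ S) :
    ∀ᶠ t in l, g t = ψ t := by
  filter_upwards [hl.eventually hψ, hS] with t hiff ht using hiff.1 ht

lemma IsLocalGraphAt.exists_isBranch {p : ℝ × Y} (h : IsLocalGraphAt S p) (hp : p ∈ S) :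
    ∃ I g, IsBranch S I g ∧ p.1 ∈ I ∧ g p.1 = p.2 ∧
      ∀ᶠ q in 𝓝 p, q ∈ S → q.1 ∈ I ∧ q.2 = g q.1 := by
  obtain ⟨ψ, hcont, hiff⟩ := h
  have hψp : p.2 = ψ p.1 := hiff.self_of_nhds.1 hp
  have hgraph : Tendsto (fun x ↦ (x, ψ x)) (𝓝 p.1) (𝓝 p) := by
    simpa [ContinuousAt, ← hψp] using continuousAt_id.prodMk hcont.self_of_nhds
  obtain ⟨l, u, hpI, hI⟩ := (hcont.and (hgraph.eventually hiff)).exists_Ioo_subset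
  refine ⟨Ioo l u, ψ, ⟨isOpen_Ioo, ordConnected_Ioo, fun x hx ↦ (hI hx).1.continuousWithinAt,
    fun x hx ↦ (hI hx).2.2 rfl⟩, hpI, hψp.symm, ?_⟩
  filter_upwards [hiff, continuous_fst.continuousAt.preimage_mem_nhds (isOpen_Ioo.mem_nhds hpI)]
    with q hq hqI hqS using ⟨hqI, hq.1 hqS⟩

namespace IsBranch

variable {I₁ I₂ I : Set ℝ} {g₁ g₂ g : ℝ → Y}

lemma mem_connectedComponentIn (hg : IsBranch S I g) {t : ℝ} (ht : t ∈ I) :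
    ∀ s ∈ I, (s, g s) ∈ connectedComponentIn S (t, g t) := by
  have hpre : IsPreconnected ((fun s ↦ (s, g s)) '' I) :=
    hg.ordConnected.isPreconnected.image _ (continuousOn_id.prodMk hg.continuousOn)
  intro s hs
  refine hpre.subset_connectedComponentIn (mem_image_of_mem _ ht) ?_ (mem_image_of_mem _ hs)
  rintro _ ⟨r, hr, rfl⟩
  exact hg.mem r hr

lemma eqOn_inter [T2Space Y] (hg₁ : IsBranch S I₁ g₁) (hg₂ : IsBranch S I₂ g₂)
    (hloc : ∀ t ∈ I₁ ∩ I₂, IsLocalGraphAt S (t, g₁ t)) {t₀ : ℝ} (ht₀ : t₀ ∈ I₁ ∩ I₂)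
    (heq : g₁ t₀ = g₂ t₀) : EqOn g₁ g₂ (I₁ ∩ I₂) := by
  have hcont₁ : ∀ t ∈ I₁ ∩ I₂, ContinuousAt g₁ t := fun t ht ↦
    hg₁.continuousOn.continuousAt (hg₁.isOpen.mem_nhds ht.1)
  have hcont₂ : ∀ t ∈ I₁ ∩ I₂, ContinuousAt g₂ t := fun t ht ↦
    hg₂.continuousOn.continuousAt (hg₂.isOpen.mem_nhds ht.2)
  have hlocal : ∀ a ∈ I₁ ∩ I₂, ∀ᶠ b in 𝓝 a, (g₁ b = g₂ b ↔ g₁ a = g₂ a) := by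
    intro a ha
    by_cases hga : g₁ a = g₂ a
    · obtain ⟨ψ, -, hiff⟩ := hloc a ha
      have h₁ := eventually_eq_of_eventually_mem_iff hiff (continuousAt_id.prodMk (hcont₁ a ha))
        (eventually_of_mem (hg₁.isOpen.mem_nhds ha.1) hg₁.mem)
      rw [hga] at hiff
      have h₂ := eventually_eq_of_eventually_mem_iff hiff (continuousAt_id.prodMk (hcont₂ a ha))
        (eventually_of_mem (hg₂.isOpen.mem_nhds ha.2) hg₂.mem)
      filter_upwards [h₁, h₂] with b hb₁ hb₂
      simp [hb₁, hb₂, hga]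
    · filter_upwards [((hcont₁ a ha).ne_iff_eventually_ne (hcont₂ a ha)).1 hga] with b hb
      simp [hb, hga]
  intro t ht
  refine (hg₁.ordConnected.inter hg₂.ordConnected).isPreconnected.induction₂'
    (fun a b ↦ g₁ a = g₂ a ↔ g₁ b = g₂ b) (fun a ha ↦ ?_) (fun _ _ _ _ _ _ ↦ Iff.trans) ht₀ ht
    |>.1 heq
  filter_upwards [nhdsWithin_le_nhds (hlocal a ha)] with b hb using ⟨hb.symm, hb⟩

lemma exists_union (hg₁ : IsBranch S I₁ g₁) (hg₂ : IsBranch S I₂ g₂) {t₀ : ℝ}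
    (ht₀ : t₀ ∈ I₁ ∩ I₂) (heq : EqOn g₁ g₂ (I₁ ∩ I₂)) :
    ∃ g, IsBranch S (I₁ ∪ I₂) g ∧ EqOn g g₁ I₁ ∧ EqOn g g₂ I₂ := by
  classical
  have h₁ : EqOn (I₁.piecewise g₁ g₂) g₁ I₁ := piecewise_eqOn _ _ _
  have h₂ : EqOn (I₁.piecewise g₁ g₂) g₂ I₂ := fun t ht ↦ by
    by_cases ht₁ : t ∈ I₁
    · rw [piecewise_eq_of_mem _ _ _ ht₁, heq ⟨ht₁, ht⟩]
    · exact piecewise_eq_of_notMem _ _ _ ht₁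
  refine ⟨I₁.piecewise g₁ g₂, ⟨hg₁.isOpen.union hg₂.isOpen, ?_, ?_, ?_⟩, h₁, h₂⟩
  · exact ((hg₁.ordConnected.isPreconnected.union t₀ ht₀.1 ht₀.2
      hg₂.ordConnected.isPreconnected)).ordConnected
  · exact (hg₁.continuousOn.congr h₁).union_of_isOpen (hg₂.continuousOn.congr h₂)
      hg₁.isOpen hg₂.isOpen
  · rintro t (ht | ht)
    · rw [h₁ ht]; exact hg₁.mem t ht
    · rw [h₂ ht]; exact hg₂.mem t ht

end IsBranch

variable [T2Space Y] {p₀ : ℝ × Y}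

lemma exists_isBranch_through_of_mem_connectedComponentIn
    (hloc : ∀ p ∈ connectedComponentIn S p₀, IsLocalGraphAt S p)
    {p q : ℝ × Y} (hp : p ∈ connectedComponentIn S p₀) (hq : q ∈ connectedComponentIn S p₀) :
    ∃ I g, IsBranch S I g ∧ p.1 ∈ I ∧ g p.1 = p.2 ∧ q.1 ∈ I ∧ g q.1 = q.2 := by
  refine isPreconnected_connectedComponentIn.induction₂'
    (fun p q ↦ ∃ I g, IsBranch S I g ∧ p.1 ∈ I ∧ g p.1 = p.2 ∧ q.1 ∈ I ∧ g q.1 = q.2)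
    (fun p hp ↦ ?_) (fun p q r _ hq _ hpq hqr ↦ ?_) hp hq
  · obtain ⟨I, g, hg, hpI, hgp, hnear⟩ :=
      (hloc p hp).exists_isBranch (connectedComponentIn_subset _ _ hp)
    filter_upwards [nhdsWithin_le_nhds hnear, self_mem_nhdsWithin] with q hq hqΓ
    obtain ⟨hqI, hgq⟩ := hq (connectedComponentIn_subset _ _ hqΓ)
    exact ⟨⟨I, g, hg, hpI, hgp, hqI, hgq.symm⟩, ⟨I, g, hg, hqI, hgq.symm, hpI, hgp⟩⟩
  · obtain ⟨I₁, g₁, hg₁, hpI₁, hgp₁, hqI₁, hgq₁⟩ := hpq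
    obtain ⟨I₂, g₂, hg₂, hqI₂, hgq₂, hrI₂, hgr₂⟩ := hqr
    have hΓ : connectedComponentIn S p₀ = connectedComponentIn S (q.1, g₁ q.1) := by
      rw [hgq₁]; exact connectedComponentIn_eq hq
    have heq := hg₁.eqOn_inter hg₂
      (fun t ht ↦ hloc _ (hΓ ▸ hg₁.mem_connectedComponentIn hqI₁ t ht.1)) ⟨hqI₁, hqI₂⟩
      (hgq₁.trans hgq₂.symm)
    obtain ⟨g, hg, h₁, h₂⟩ := hg₁.exists_union hg₂ ⟨hqI₁, hqI₂⟩ heq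
    exact ⟨I₁ ∪ I₂, g, hg, Or.inl hpI₁, (h₁ hpI₁).trans hgp₁, Or.inr hrI₂, (h₂ hrI₂).trans hgr₂⟩

theorem exists_isBranch_eq_connectedComponentIn
    (hloc : ∀ p ∈ connectedComponentIn S p₀, IsLocalGraphAt S p) :
    ∃ J h, IsBranch S J h ∧ connectedComponentIn S p₀ = {p | p.1 ∈ J ∧ p.2 = h p.1} := by
  classical
  set Γ := connectedComponentIn S p₀
  have hinj : ∀ p ∈ Γ, ∀ q ∈ Γ, p.1 = q.1 → p.2 = q.2 := fun p hp q hq hpq ↦ by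
    obtain ⟨I, g, -, -, hgp, -, hgq⟩ :=
      exists_isBranch_through_of_mem_connectedComponentIn hloc hp hq
    rw [← hgp, ← hgq, hpq]
  set h : ℝ → Y := fun x ↦ if hx : ∃ y, (x, y) ∈ Γ then hx.choose else p₀.2
  have hh : ∀ p ∈ Γ, (p.1, h p.1) ∈ Γ ∧ p.2 = h p.1 := fun p hp ↦ by
    have hx : ∃ y, (p.1, y) ∈ Γ := ⟨p.2, hp⟩
    have hmem : (p.1, h p.1) ∈ Γ := by simpa only [h, dif_pos hx] using hx.choose_spec
    exact ⟨hmem, hinj p hp _ hmem rfl⟩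
  set J := Prod.fst '' Γ
  have hΓ : Γ = {p | p.1 ∈ J ∧ p.2 = h p.1} := by
    ext p
    refine ⟨fun hp ↦ ⟨mem_image_of_mem _ hp, (hh p hp).2⟩, ?_⟩
    rintro ⟨⟨q, hq, hqp⟩, hp⟩
    have hmem := (hh q hq).1
    rwa [hqp, ← hp] at hmem
  have hlocal : ∀ x ∈ J, ∃ I g, IsBranch S I g ∧ x ∈ I ∧ I ⊆ J ∧ EqOn h g I := by
    rintro _ ⟨q, hq, rfl⟩
    obtain ⟨I, g, hg, hqI, hgq, -⟩ :=
      (hloc q hq).exists_isBranch (connectedComponentIn_subset _ _ hq)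
    have hgΓ : ∀ t ∈ I, (t, g t) ∈ Γ := by
      have hΓq : Γ = connectedComponentIn S (q.1, g q.1) := by
        rw [hgq]; exact connectedComponentIn_eq hq
      rw [hΓq]
      exact hg.mem_connectedComponentIn hqI
    exact ⟨I, g, hg, hqI, fun t ht ↦ mem_image_of_mem _ (hgΓ t ht),
      fun t ht ↦ ((hh _ (hgΓ t ht)).2).symm⟩
  refine ⟨J, h, ⟨?_, ?_, ?_, ?_⟩, hΓ⟩
  · refine isOpen_iff_mem_nhds.2 fun x hx ↦ ?_
    obtain ⟨I, g, hg, hxI, hIJ, -⟩ := hlocal x hx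
    exact mem_of_superset (hg.isOpen.mem_nhds hxI) hIJ
  · exact (isPreconnected_connectedComponentIn.image _ continuous_fst.continuousOn).ordConnected
  · intro x hx
    obtain ⟨I, g, hg, hxI, -, hhg⟩ := hlocal x hx
    have hI : I ∈ 𝓝 x := hg.isOpen.mem_nhds hxI
    exact ((hg.continuousOn.continuousAt hI).congr
      (eventually_of_mem hI fun t ht ↦ (hhg ht).symm)).continuousWithinAt
  · intro x hx
    exact connectedComponentIn_subset _ _ (hΓ ▸ ⟨hx, rfl⟩ : (x, h x) ∈ Γ)

end Branches

lemma IsLocalGraphAt.of_contDiffAt {F : Type*} [NormedAddCommGroup F] [NormedSpace ℝ F]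
    {S : Set (ℝ × F)} {p : ℝ × F} {ψ : ℝ → F} {n : WithTop ℕ∞} (hψ : ContDiffAt ℝ n ψ p.1)
    (hn : n ≠ ∞) (hS : ∀ᶠ v in 𝓝 p, v ∈ S ↔ v.2 = ψ v.1) : IsLocalGraphAt S p :=
  ⟨ψ, (hψ.eventually hn).mono fun _ hx ↦ hx.continuousAt, hS⟩

lemma IsBranch.contDiffOn {F : Type*} [NormedAddCommGroup F] [NormedSpace ℝ F] {S : Set (ℝ × F)}
    {J : Set ℝ} {h : ℝ → F} {n : WithTop ℕ∞} (hh : IsBranch S J h)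
    (himpl : ∀ x ∈ J, ∃ ψ : ℝ → F, ContDiffAt ℝ n ψ x ∧ ∀ᶠ v in 𝓝 (x, h x), v ∈ S ↔ v.2 = ψ v.1) :
    ContDiffOn ℝ n h J := by
  intro x hx
  obtain ⟨ψ, hψ, hiff⟩ := himpl x hx
  have hJ : J ∈ 𝓝 x := hh.isOpen.mem_nhds hx
  have heq : ∀ᶠ t in 𝓝 x, h t = ψ t := eventually_eq_of_eventually_mem_iff hiff
    (continuousAt_id.prodMk (hh.continuousOn.continuousAt hJ)) (eventually_of_mem hJ hh.mem)
  exact (hψ.congr_of_eventuallyEq heq).contDiffWithinAt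

lemma swap_mem_connectedComponentIn {α : Type*} [TopologicalSpace α] {S : Set (α × α)}
    (hS : ∀ p ∈ S, p.swap ∈ S) {a : α} {p : α × α} (hp : p ∈ connectedComponentIn S (a, a)) :
    p.swap ∈ connectedComponentIn S (a, a) := by
  have ha : (a, a) ∈ S := connectedComponentIn_nonempty_iff.1 ⟨p, hp⟩
  exact connectedComponentIn_mono _ (image_subset_iff.2 hS)
    (continuous_swap.continuousOn.mapsTo_connectedComponentIn ha hp)

lemma fderiv_apply_swap_of_eventually_swap_eq {𝕜 E F : Type*} [NontriviallyNormedField 𝕜]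
    [NormedAddCommGroup E] [NormedSpace 𝕜 E] [NormedAddCommGroup F] [NormedSpace 𝕜 F]
    {f : E × E → F} {a : E} (hf : DifferentiableAt 𝕜 f (a, a))
    (hsym : ∀ᶠ p in 𝓝 (a, a), f p.swap = f p) (u v : E) :
    fderiv 𝕜 f (a, a) (u, v) = fderiv 𝕜 f (a, a) (v, u) := by
  have hswap : HasFDerivAt (fun p ↦ f p.swap)
      (fderiv 𝕜 f (a, a) ∘L (ContinuousLinearEquiv.prodComm 𝕜 E E : E × E →L[𝕜] E × E)) (a, a) :=
    hf.hasFDerivAt.comp (a, a) (ContinuousLinearEquiv.prodComm 𝕜 E E).hasFDerivAt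
  have := hswap.unique (hf.hasFDerivAt.congr_of_eventuallyEq hsym)
  simpa using DFunLike.congr_fun this (v, u)

lemma fderiv_apply_one_eq_zero_of_eventually_eq {f : ℝ × ℝ → ℝ} {h : ℝ → ℝ} {h' x : ℝ}
    (hf : DifferentiableAt ℝ f (x, h x)) (hh : HasDerivAt h h' x)
    (hconst : ∀ᶠ t in 𝓝 x, f (t, h t) = f (x, h x)) :
    fderiv ℝ f (x, h x) (1, h') = 0 := by
  have hcomp : HasDerivAt (fun t ↦ f (t, h t)) (fderiv ℝ f (x, h x) (1, h')) x :=
    hf.hasFDerivAt.comp_hasDerivAt x ((hasDerivAt_id x).prodMk hh)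
  exact hcomp.unique ((hasDerivAt_const x _).congr_of_eventuallyEq hconst)

lemma HasDerivAt.mul_eq_one_of_eventually_leftInverse {g h : ℝ → ℝ} {a b x : ℝ}
    (hh : HasDerivAt h a x) (hg : HasDerivAt g b (h x)) (hinv : ∀ᶠ t in 𝓝 x, g (h t) = t) :
    b * a = 1 :=
  (hg.comp x hh).unique ((hasDerivAt_id x).congr_of_eventuallyEq hinv)

lemma IsPreconnected.forall_lt_of_forall_ne {α β : Type*} [TopologicalSpace α] [LinearOrder β]
    [TopologicalSpace β] [OrderClosedTopology β] {s : Set α} (hs : IsPreconnected s) {f : α → β}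
    (hf : ContinuousOn f s) {c : β} (hne : ∀ x ∈ s, f x ≠ c) {a : α} (ha : a ∈ s)
    (hfa : f a < c) : ∀ x ∈ s, f x < c := by
  intro x hx
  by_contra! hcx
  obtain ⟨y, hy, hyc⟩ := hs.intermediate_value ha hx hf ⟨hfa.le, hcx⟩
  exact hne y hy hyc

lemma ContDiffOn.hasDerivAt_deriv {J : Set ℝ} {h : ℝ → ℝ} {n : WithTop ℕ∞}
    (hh : ContDiffOn ℝ n h J) (hn : n ≠ 0) (hJ : IsOpen J) {x : ℝ} (hx : x ∈ J) :
    HasDerivAt h (deriv h x) x :=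
  ((hh.differentiableOn hn x hx).differentiableAt (hJ.mem_nhds hx)).hasDerivAt

lemma ContDiffOn.deriv_lt_zero_of_involutive {J : Set ℝ} {h : ℝ → ℝ} (hh : ContDiffOn ℝ 1 h J)
    (hJ : IsOpen J) (hJc : IsPreconnected J) (hmaps : MapsTo h J J)
    (hinv : ∀ x ∈ J, h (h x) = x) {a : ℝ} (ha : a ∈ J) (hneg : deriv h a < 0) :
    ∀ x ∈ J, deriv h x < 0 := by
  refine hJc.forall_lt_of_forall_ne (hh.continuousOn_deriv_of_isOpen hJ le_rfl)
    (fun x hx h0 ↦ ?_) ha hneg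
  have := (hh.hasDerivAt_deriv one_ne_zero hJ hx).mul_eq_one_of_eventually_leftInverse
    (hh.hasDerivAt_deriv one_ne_zero hJ (hmaps hx))
    (eventually_of_mem (hJ.mem_nhds hx) hinv)
  simp [h0] at this

lemma HasDerivAt.eq_neg_one_of_symmetric {f : ℝ × ℝ → ℝ} {h : ℝ → ℝ} {h' a : ℝ}
    (hh : HasDerivAt h h' a) (hf : DifferentiableAt ℝ f (a, a))
    (hsym : ∀ᶠ p in 𝓝 (a, a), f p.swap = f p) (hd : fderiv ℝ f (a, a) (0, 1) ≠ 0) (ha : h a = a)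
    (hconst : ∀ᶠ t in 𝓝 a, f (t, h t) = f (a, a)) : h' = -1 := by
  have h0 := fderiv_apply_one_eq_zero_of_eventually_eq (by rwa [ha]) hh (by rwa [ha])
  rw [ha] at h0
  have hsplit : ((1 : ℝ), h') = ((1 : ℝ), (0 : ℝ)) + h' • ((0 : ℝ), (1 : ℝ)) := by simp
  rw [hsplit, map_add, map_smul, fderiv_apply_swap_of_eventually_swap_eq hf hsym 1 0,
    smul_eq_mul, ← one_add_mul] at h0
  have := (mul_eq_zero.1 h0).resolve_right hd
  linarith

theorem symmetric_equation_gives_smooth_involution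
    (Ω : Set (ℝ × ℝ)) (hΩopen : IsOpen Ω) (h0Ω : ((0:ℝ), (0:ℝ)) ∈ Ω)
    (f : ℝ × ℝ → ℝ) (hf : ContDiffOn ℝ 1 f Ω)
    (hf0 : f (0, 0) = 0)
    (hΩsym : ∀ p : ℝ × ℝ, p ∈ Ω → (p.2, p.1) ∈ Ω)
    (hfsym : ∀ p : ℝ × ℝ, p ∈ Ω → f (p.2, p.1) = f p)
    (Γ : Set (ℝ × ℝ))
    (hΓ : Γ = connectedComponentIn {p ∈ Ω | f p = 0} ((0:ℝ), (0:ℝ)))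
    (hd2 : ∀ p ∈ Γ, fderiv ℝ f p (0, 1) ≠ 0) :
    ∃ (J : Set ℝ) (h h' : ℝ → ℝ),
      IsOpen J ∧ J.OrdConnected ∧ (0:ℝ) ∈ J ∧
      Set.MapsTo h J J ∧
      (∀ x ∈ J, HasDerivAt h (h' x) x) ∧
      ContinuousOn h' J ∧
      h 0 = 0 ∧
      (∀ x ∈ J, h' x < 0) ∧
      (∀ x ∈ J, h (h x) = x) ∧
      Γ = {p : ℝ × ℝ | p.1 ∈ J ∧ p.2 = h p.1} := by
  set S : Set (ℝ × ℝ) := {p ∈ Ω | f p = 0}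
  have hΓS : Γ ⊆ S := hΓ ▸ connectedComponentIn_subset _ _
  have himpl : ∀ p ∈ Γ, ∃ ψ : ℝ → ℝ, ContDiffAt ℝ 1 ψ p.1 ∧ ∀ᶠ v in 𝓝 p, v ∈ S ↔ v.2 = ψ v.1 :=
    fun p hp ↦ (hf.contDiffAt (hΩopen.mem_nhds (hΓS hp).1)).exists_implicit_contDiffAt
      (hΩopen.mem_nhds (hΓS hp).1) (hΓS hp).2 (hd2 p hp)
  obtain ⟨J, h, hJ, hgraph⟩ := exists_isBranch_eq_connectedComponentIn (S := S) (p₀ := (0, 0))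
    fun p hp ↦ by
      obtain ⟨ψ, hψ, hiff⟩ := himpl p (hΓ ▸ hp)
      exact .of_contDiffAt hψ (by simp) hiff
  rw [← hΓ] at hgraph
  have hmem : ∀ x ∈ J, (x, h x) ∈ Γ := fun x hx ↦ hgraph ▸ ⟨hx, rfl⟩
  have h0Γ : ((0:ℝ), (0:ℝ)) ∈ Γ := hΓ ▸ mem_connectedComponentIn ⟨h0Ω, hf0⟩
  obtain ⟨h0J, h00⟩ : (0:ℝ) ∈ J ∧ (0:ℝ) = h 0 := by rw [hgraph] at h0Γ; exact h0Γ
  have hinv : ∀ x ∈ J, h x ∈ J ∧ x = h (h x) := fun x hx ↦ by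
    have hswap := swap_mem_connectedComponentIn (S := S)
      (fun p hp ↦ ⟨hΩsym p hp.1, (hfsym p hp.1).trans hp.2⟩) (hΓ ▸ hmem x hx)
    rwa [← hΓ, hgraph] at hswap
  have hC1 : ContDiffOn ℝ 1 h J := hJ.contDiffOn fun x hx ↦ himpl _ (hmem x hx)
  have hderiv0 : deriv h 0 = -1 :=
    (hC1.hasDerivAt_deriv one_ne_zero hJ.isOpen h0J).eq_neg_one_of_symmetric
      ((hf.contDiffAt (hΩopen.mem_nhds h0Ω)).differentiableAt one_ne_zero)
      (eventually_of_mem (hΩopen.mem_nhds h0Ω) hfsym) (hd2 _ h0Γ) h00.symm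
      (eventually_of_mem (hJ.isOpen.mem_nhds h0J) fun t ht ↦ (hΓS (hmem t ht)).2.trans hf0.symm)
  refine ⟨J, h, deriv h, hJ.isOpen, hJ.ordConnected, h0J, fun x hx ↦ (hinv x hx).1,
    fun x hx ↦ hC1.hasDerivAt_deriv one_ne_zero hJ.isOpen hx,
    hC1.continuousOn_deriv_of_isOpen hJ.isOpen le_rfl, h00.symm,
    hC1.deriv_lt_zero_of_involutive hJ.isOpen hJ.ordConnected.isPreconnected
      (fun x hx ↦ (hinv x hx).1) (fun x hx ↦ (hinv x hx).2.symm) h0J (by rw [hderiv0]; norm_num),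
    fun x hx ↦ (hinv x hx).2.symm, hgraph⟩
end

section
/- Every smooth involution h : J → J (C¹, h∘h = id, h(0)=0, h ≠ id, J ∋ 0 open interval) arises as in Proposition 'smooth symmetric equation': specifically, f(x,y) := x + y − h(x) − h(y) is a C¹ symmetric function on J × J with f(0,0) = 0, ∂₂f > 0 everywhere, and f⁻¹(0) equals exactly the graph of h. -/
/-!
Write `f x y = g x + g y` with `g t = t - h t`. Differentiating `h ∘ h = id` gives
`h' (h y) * h' y = 1`, so `h'` never vanishes on `J`. A point `x₀` with `h x₀ ≠ x₀` is swapped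
with `h x₀` by `h`, so the mean value theorem on the interval between them yields a point where
`h' = -1`; by the intermediate value theorem `h' < 0` on all of `J`. Hence `g' = 1 - h' > 0`, so
`g` is injective on `J`, and `f x y = 0 ↔ g y = -g x = g (h x) ↔ y = h x`.
-/

open Set

theorem exists_hasDerivAt_eq_neg_one_of_swap {h h' : ℝ → ℝ} {a b : ℝ} (hab : a < b)
    (hcont : ContinuousOn h (Icc a b)) (hderiv : ∀ x ∈ Ioo a b, HasDerivAt h (h' x) x)
    (ha : h a = b) (hb : h b = a) : ∃ c ∈ Ioo a b, h' c = -1 := by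
  obtain ⟨c, hc, hslope⟩ := exists_hasDerivAt_eq_slope h h' hab hcont hderiv
  refine ⟨c, hc, ?_⟩
  rw [hslope, ha, hb, div_eq_iff (sub_ne_zero.mpr hab.ne')]
  ring

namespace Involution

variable {J : Set ℝ} {h h' : ℝ → ℝ}

theorem deriv_apply_mul_deriv_eq_one (hJopen : IsOpen J) (hmaps : MapsTo h J J)
    (hderiv : ∀ x ∈ J, HasDerivAt h (h' x) x) (hinv : ∀ x ∈ J, h (h x) = x)
    {y : ℝ} (hy : y ∈ J) : h' (h y) * h' y = 1 := by
  have hcomp : HasDerivAt (h ∘ h) (h' (h y) * h' y) y :=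
    (hderiv (h y) (hmaps hy)).comp y (hderiv y hy)
  have hid : h ∘ h =ᶠ[nhds y] id := by
    filter_upwards [hJopen.mem_nhds hy] with t ht using hinv t ht
  exact hcomp.unique ((hasDerivAt_id y).congr_of_eventuallyEq hid)

theorem exists_deriv_eq_neg_one (hJconn : J.OrdConnected) (hmaps : MapsTo h J J)
    (hderiv : ∀ x ∈ J, HasDerivAt h (h' x) x) (hinv : ∀ x ∈ J, h (h x) = x)
    (hne : ∃ x ∈ J, h x ≠ x) : ∃ c ∈ J, h' c = -1 := by
  have swap : ∀ a ∈ J, a < h a → ∃ c ∈ J, h' c = -1 := by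
    intro a ha hlt
    have hsub : Icc a (h a) ⊆ J := hJconn.out ha (hmaps ha)
    obtain ⟨c, hc, hc'⟩ := exists_hasDerivAt_eq_neg_one_of_swap hlt
      (fun x hx => (hderiv x (hsub hx)).continuousAt.continuousWithinAt)
      (fun x hx => hderiv x (hsub (Ioo_subset_Icc_self hx))) rfl (hinv a ha)
    exact ⟨c, hsub (Ioo_subset_Icc_self hc), hc'⟩
  obtain ⟨x₀, hx₀, hfix⟩ := hne
  rcases hfix.lt_or_gt with hlt | hgt
  · exact swap (h x₀) (hmaps hx₀) (by rwa [hinv x₀ hx₀])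
  · exact swap x₀ hx₀ hgt

theorem deriv_neg (hJopen : IsOpen J) (hJconn : J.OrdConnected) (hmaps : MapsTo h J J)
    (hderiv : ∀ x ∈ J, HasDerivAt h (h' x) x) (hderiv_cont : ContinuousOn h' J)
    (hinv : ∀ x ∈ J, h (h x) = x) (hne : ∃ x ∈ J, h x ≠ x) {y : ℝ} (hy : y ∈ J) :
    h' y < 0 := by
  have hne0 : ∀ x ∈ J, h' x ≠ 0 := fun x hx =>
    right_ne_zero_of_mul_eq_one (deriv_apply_mul_deriv_eq_one hJopen hmaps hderiv hinv hx)
  obtain ⟨c, hc, hc'⟩ := exists_deriv_eq_neg_one hJconn hmaps hderiv hinv hne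
  exact hJconn.isPreconnected.gt_of_ne hderiv_cont hne0 ⟨c, hc, by rw [hc']; norm_num⟩ hy

theorem add_sub_sub_eq_zero_iff (hmaps : MapsTo h J J) (hinv : ∀ x ∈ J, h (h x) = x)
    (hinj : InjOn (fun t => t - h t) J) {x y : ℝ} (hx : x ∈ J) (hy : y ∈ J) :
    x + y - h x - h y = 0 ↔ y = h x := by
  constructor
  · intro hxy
    exact hinj hy (hmaps hx) (by simp only [hinv x hx]; linarith)
  · rintro rfl
    rw [hinv x hx]
    ring

end Involution

theorem strictMonoOn_sub_of_deriv_lt_one {J : Set ℝ} {h h' : ℝ → ℝ} (hJopen : IsOpen J)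
    (hJconn : J.OrdConnected) (hderiv : ∀ x ∈ J, HasDerivAt h (h' x) x)
    (hlt : ∀ x ∈ J, h' x < 1) : StrictMonoOn (fun t => t - h t) J := by
  have hsub : ∀ x ∈ J, HasDerivAt (fun t => t - h t) (1 - h' x) x :=
    fun x hx => (hasDerivAt_id x).sub (hderiv x hx)
  refine strictMonoOn_of_hasDerivWithinAt_pos hJconn.convex
    (fun x hx => (hsub x hx).continuousAt.continuousWithinAt) (f' := fun x => 1 - h' x) ?_ ?_
  · rw [hJopen.interior_eq]
    exact fun x hx => (hsub x hx).hasDerivWithinAt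
  · rw [hJopen.interior_eq]
    exact fun x hx => sub_pos.mpr (hlt x hx)

theorem smooth_involution_from_symmetric_equation_general
    (J : Set ℝ) (hJopen : IsOpen J) (hJconn : J.OrdConnected)
    (h h' : ℝ → ℝ) (hmaps : Set.MapsTo h J J)
    (hderiv : ∀ x ∈ J, HasDerivAt h (h' x) x)
    (hderiv_cont : ContinuousOn h' J)
    (hinv : ∀ x ∈ J, h (h x) = x)
    (h0 : h 0 = 0)
    (hne : ∃ x ∈ J, h x ≠ x)
    (f : ℝ → ℝ → ℝ) (hf : ∀ x y, f x y = x + y - h x - h y) :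
    (∀ x y, f x y = f y x) ∧
    f 0 0 = 0 ∧
    (∀ x ∈ J, ∀ y ∈ J, HasDerivAt (fun z => f x z) (1 - h' y) y ∧ 0 < 1 - h' y) ∧
    {p : ℝ × ℝ | p.1 ∈ J ∧ p.2 ∈ J ∧ f p.1 p.2 = 0} = {p : ℝ × ℝ | p.1 ∈ J ∧ p.2 = h p.1} := by
  have hneg : ∀ y ∈ J, h' y < 0 := fun y hy =>
    Involution.deriv_neg hJopen hJconn hmaps hderiv hderiv_cont hinv hne hy
  have hmono := strictMonoOn_sub_of_deriv_lt_one hJopen hJconn hderiv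
    fun y hy => (hneg y hy).trans one_pos
  refine ⟨fun x y => by rw [hf, hf]; ring, by rw [hf, h0]; ring, ?_, ?_⟩
  · intro x _ y hy
    have hfx : (fun z => f x z) = fun z => (x - h x) + (z - h z) := by
      funext z; rw [hf]; ring
    refine ⟨?_, by linarith [hneg y hy]⟩
    rw [hfx]
    exact ((hasDerivAt_id y).sub (hderiv y hy)).const_add (x - h x)
  · ext ⟨x, y⟩
    simp only [mem_ofPred_eq, hf]
    constructor
    · rintro ⟨hx, hy, hxy⟩
      exact ⟨hx, (Involution.add_sub_sub_eq_zero_iff hmaps hinv hmono.injOn hx hy).mp hxy⟩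
    · rintro ⟨hx, rfl⟩
      exact ⟨hx, hmaps hx, (Involution.add_sub_sub_eq_zero_iff hmaps hinv hmono.injOn hx
        (hmaps hx)).mpr rfl⟩

theorem smooth_involution_from_symmetric_equation
    (J : Set ℝ) (hJopen : IsOpen J) (hJconn : J.OrdConnected) (h0J : (0:ℝ) ∈ J)
    (h h' : ℝ → ℝ) (hmaps : Set.MapsTo h J J)
    (hderiv : ∀ x ∈ J, HasDerivAt h (h' x) x)
    (hderiv_cont : ContinuousOn h' J)
    (hinv : ∀ x ∈ J, h (h x) = x)
    (h0 : h 0 = 0)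
    (hne : ∃ x ∈ J, h x ≠ x)
    (f : ℝ → ℝ → ℝ) (hf : ∀ x y, f x y = x + y - h x - h y) :
    (∀ x y, f x y = f y x) ∧
    f 0 0 = 0 ∧
    (∀ x ∈ J, ∀ y ∈ J, HasDerivAt (fun z => f x z) (1 - h' y) y ∧ 0 < 1 - h' y) ∧
    {p : ℝ × ℝ | p.1 ∈ J ∧ p.2 ∈ J ∧ f p.1 p.2 = 0} = {p : ℝ × ℝ | p.1 ∈ J ∧ p.2 = h p.1} :=
  smooth_involution_from_symmetric_equation_general J hJopen hJconn h h' hmaps hderiv hderiv_cont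
    hinv h0 hne f hf
end

section
/- If V : J → ℝ is a C⁴ potential with V(0) = 0, V'(0) = 0, V''(0) > 0, which is isochronous, i.e., V(x) = (ω²/8)(x − h(x))² for a C⁴ involution h with h(0)=0 and ω² = V''(0), then V⁽⁴⁾(0) = 5 V'''(0)² / (3 V''(0)). -/
/-!
With `g x = x - h x` we have `V = (ω²/8) g²` near `0` and `g 0 = 0`, so Leibniz' rule gives
`V⁽²⁾ = (ω²/4) (g′)²`, `V⁽³⁾ = (3ω²/4) g′ g⁽²⁾` and `V⁽⁴⁾ = (ω²/8) (6 (g⁽²⁾)² + 8 g′ g⁽³⁾)` at `0`.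
Differentiating `h (h x) = x` at the fixed point `0` gives `h′(0)² = 1` and, at third order,
`2 h⁽³⁾(0) = -3 h⁽²⁾(0)²`. Since `V⁽²⁾(0) > 0` rules out `h′(0) = 1`, we get `g′(0) = 2`, and
the claimed relation becomes an identity in `ω` and `h⁽²⁾(0)`.
-/

open Set Filter Topology

section LeftInvOn

variable {𝕜 : Type*} [NontriviallyNormedField 𝕜] {f : 𝕜 → 𝕜} {s : Set 𝕜}

lemma eqOn_deriv_comp_mul_deriv_of_leftInvOn (hs : IsOpen s) (hmaps : MapsTo f s s)
    (hf : DifferentiableOn 𝕜 f s) (hinv : LeftInvOn f f s) :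
    s.EqOn (fun x ↦ deriv f (f x) * deriv f x) 1 := by
  intro x hx
  dsimp only [Pi.one_apply]
  have hcomp : HasDerivAt (fun y ↦ f (f y)) (deriv f (f x) * deriv f x) x :=
    (hf.hasDerivAt (hs.mem_nhds (hmaps hx))).comp x (hf.hasDerivAt (hs.mem_nhds hx))
  rw [← hcomp.deriv, Set.EqOn.deriv (g := id) hinv hs hx, deriv_id]

lemma eqOn_deriv_deriv_comp_of_leftInvOn (hs : IsOpen s) (hmaps : MapsTo f s s)
    (hf : DifferentiableOn 𝕜 f s) (hf' : DifferentiableOn 𝕜 (deriv f) s)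
    (hinv : LeftInvOn f f s) :
    s.EqOn (fun x ↦ deriv (deriv f) (f x) * deriv f x ^ 2 + deriv f (f x) * deriv (deriv f) x)
      0 := by
  intro x hx
  dsimp only [Pi.zero_apply]
  have hd : HasDerivAt (fun y ↦ deriv f (f y) * deriv f y)
      (deriv (deriv f) (f x) * deriv f x ^ 2 + deriv f (f x) * deriv (deriv f) x) x := by
    refine (((hf'.hasDerivAt (hs.mem_nhds (hmaps hx))).comp x
      (hf.hasDerivAt (hs.mem_nhds hx))).mul (hf'.hasDerivAt (hs.mem_nhds hx))).congr_deriv ?_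
    simp only [Function.comp_apply]
    ring
  rw [← hd.deriv, (eqOn_deriv_comp_mul_deriv_of_leftInvOn hs hmaps hf hinv).deriv hs hx]
  simp

variable {x₀ : 𝕜}

lemma deriv_sq_eq_one_of_leftInvOn (hs : IsOpen s) (hmaps : MapsTo f s s)
    (hf : DifferentiableOn 𝕜 f s) (hinv : LeftInvOn f f s) (hx₀ : x₀ ∈ s)
    (hfix : f x₀ = x₀) : deriv f x₀ ^ 2 = 1 := by
  simpa [hfix, sq] using eqOn_deriv_comp_mul_deriv_of_leftInvOn hs hmaps hf hinv hx₀

lemma two_mul_iteratedDeriv_three_of_leftInvOn (hs : IsOpen s) (hmaps : MapsTo f s s)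
    (hf : ContDiffOn 𝕜 3 f s) (hinv : LeftInvOn f f s) (hx₀ : x₀ ∈ s)
    (hfix : f x₀ = x₀) : 2 * iteratedDeriv 3 f x₀ = -3 * iteratedDeriv 2 f x₀ ^ 2 := by
  have hf' : ContDiffOn 𝕜 2 (deriv f) s := hf.deriv_of_isOpen hs (by norm_num)
  have hd₁ : DifferentiableOn 𝕜 f s := hf.differentiableOn (by norm_num)
  have hd₂ : DifferentiableOn 𝕜 (deriv f) s := hf'.differentiableOn (by norm_num)
  have hd₃ : DifferentiableOn 𝕜 (deriv (deriv f)) s :=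
    (hf'.deriv_of_isOpen hs (m := 1) (by norm_num)).differentiableOn one_ne_zero
  have hx₀s : s ∈ 𝓝 x₀ := hs.mem_nhds hx₀
  have hfx₀s : s ∈ 𝓝 (f x₀) := hs.mem_nhds (hmaps hx₀)
  set a := deriv f x₀
  set b := deriv (deriv f) x₀
  set e := deriv (deriv (deriv f)) x₀
  have hthird : e * (a ^ 3 + a) + 3 * a * b ^ 2 = 0 := by
    have hd : HasDerivAt
        (fun y ↦ deriv (deriv f) (f y) * deriv f y ^ 2 + deriv f (f y) * deriv (deriv f) y)
        (e * (a ^ 3 + a) + 3 * a * b ^ 2) x₀ := by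
      refine ((((hd₃.hasDerivAt hfx₀s).comp x₀ (hd₁.hasDerivAt hx₀s)).mul
        ((hd₂.hasDerivAt hx₀s).pow 2)).add
        (((hd₂.hasDerivAt hfx₀s).comp x₀ (hd₁.hasDerivAt hx₀s)).mul
          (hd₃.hasDerivAt hx₀s))).congr_deriv ?_
      simp only [Function.comp_apply, Pi.pow_apply, hfix]
      ring
    rw [← hd.deriv,
      (eqOn_deriv_deriv_comp_of_leftInvOn hs hmaps hd₁ hd₂ hinv).deriv hs hx₀]
    simp
  have ha : a ^ 2 = 1 := deriv_sq_eq_one_of_leftInvOn hs hmaps hd₁ hinv hx₀ hfix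
  simp only [iteratedDeriv_succ, iteratedDeriv_zero]
  linear_combination a * hthird - (e * (2 + a ^ 2) + 3 * b ^ 2) * ha

end LeftInvOn

section Square

variable {𝕜 : Type*} [NontriviallyNormedField 𝕜] {g : 𝕜 → 𝕜} {x : 𝕜}

lemma iteratedDeriv_two_sq_of_eq_zero (hg : ContDiffAt 𝕜 2 g x) (hx : g x = 0) :
    iteratedDeriv 2 (fun y ↦ g y ^ 2) x = 2 * deriv g x ^ 2 := by
  simp only [sq, iteratedDeriv_fun_mul hg hg, Finset.sum_range_succ]
  simp [hx]
  ring

lemma iteratedDeriv_three_sq_of_eq_zero (hg : ContDiffAt 𝕜 3 g x) (hx : g x = 0) :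
    iteratedDeriv 3 (fun y ↦ g y ^ 2) x = 6 * deriv g x * iteratedDeriv 2 g x := by
  simp only [sq, iteratedDeriv_fun_mul hg hg, Finset.sum_range_succ]
  simp [hx]
  ring

lemma iteratedDeriv_four_sq_of_eq_zero (hg : ContDiffAt 𝕜 4 g x) (hx : g x = 0) :
    iteratedDeriv 4 (fun y ↦ g y ^ 2) x =
      6 * iteratedDeriv 2 g x ^ 2 + 8 * deriv g x * iteratedDeriv 3 g x := by
  simp only [sq, iteratedDeriv_fun_mul hg hg, Finset.sum_range_succ]
  simp [hx, Nat.choose]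
  ring

lemma iteratedDeriv_id_sub_of_two_le {n : ℕ} (hg : ContDiffAt 𝕜 n g x) (hn : 2 ≤ n) :
    iteratedDeriv n (fun y ↦ y - g y) x = -iteratedDeriv n g x := by
  rw [iteratedDeriv_fun_sub (f := fun y ↦ y) contDiffAt_id hg, iteratedDeriv_fun_id,
    if_neg (by omega), if_neg (by omega), zero_sub]

end Square

theorem isochronous_fourth_derivative_condition_general
    (J : Set ℝ) (hJopen : IsOpen J) (h0J : (0:ℝ) ∈ J)
    (h : ℝ → ℝ) (hmaps : Set.MapsTo h J J)
    (hsmooth : ContDiffOn ℝ 4 h J)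
    (hinv : ∀ x ∈ J, h (h x) = x)
    (h0 : h 0 = 0)
    (ω : ℝ)
    (V : ℝ → ℝ) (hV : ∀ x ∈ J, V x = ω^2 / 8 * (x - h x)^2)
    (hV2 : 0 < iteratedDeriv 2 V 0) :
    iteratedDeriv 4 V 0 = 5 * (iteratedDeriv 3 V 0)^2 / (3 * iteratedDeriv 2 V 0) := by
  have hJ : J ∈ 𝓝 0 := hJopen.mem_nhds h0J
  have hh : ContDiffAt ℝ 4 h 0 := hsmooth.contDiffAt hJ
  have hg : ContDiffAt ℝ 4 (fun x ↦ x - h x) 0 := contDiffAt_id.sub hh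
  have hg0 : (fun x ↦ x - h x) 0 = 0 := by simp [h0]
  have hVg (n : ℕ) :
      iteratedDeriv n V 0 = ω ^ 2 / 8 * iteratedDeriv n (fun x ↦ (x - h x) ^ 2) 0 := by
    rw [(eventuallyEq_of_mem hJ hV).iteratedDeriv_eq n, iteratedDeriv_const_mul_field]
  have hg₁ : deriv (fun x ↦ x - h x) 0 = 1 - deriv h 0 :=
    ((hasDerivAt_id 0).sub (hh.differentiableAt (by norm_num)).hasDerivAt).deriv
  have hV₂ : iteratedDeriv 2 V 0 = ω ^ 2 / 8 * (2 * (1 - deriv h 0) ^ 2) := by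
    rw [hVg, iteratedDeriv_two_sq_of_eq_zero (hg.of_le (by norm_num)) hg0, hg₁]
  have ha : deriv h 0 = -1 := by
    have hsq := deriv_sq_eq_one_of_leftInvOn hJopen hmaps
      (hsmooth.differentiableOn (by norm_num)) hinv h0J h0
    refine (sq_eq_one_iff.1 hsq).resolve_left fun ha₁ ↦ ?_
    simp [hV₂, ha₁] at hV2
  have hω : ω ≠ 0 := by
    rintro rfl
    simp [hV₂] at hV2
  have hthird := two_mul_iteratedDeriv_three_of_leftInvOn hJopen hmaps
    (hsmooth.of_le (by norm_num)) hinv h0J h0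
  rw [hV₂, hVg 3, hVg 4, iteratedDeriv_three_sq_of_eq_zero (hg.of_le (by norm_num)) hg0,
    iteratedDeriv_four_sq_of_eq_zero hg hg0, hg₁, ha, iteratedDeriv_id_sub_of_two_le (hh.of_le (by norm_num)) le_rfl,
    iteratedDeriv_id_sub_of_two_le (hh.of_le (by norm_num)) (by norm_num)]
  field_simp
  linear_combination -48 * hthird

theorem isochronous_fourth_derivative_condition
    (J : Set ℝ) (hJopen : IsOpen J) (hJconn : J.OrdConnected) (h0J : (0:ℝ) ∈ J)
    (h : ℝ → ℝ) (hmaps : Set.MapsTo h J J)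
    (hsmooth : ContDiffOn ℝ 4 h J)
    (hinv : ∀ x ∈ J, h (h x) = x)
    (h0 : h 0 = 0)
    (hne : ∃ x ∈ J, h x ≠ x)
    (ω : ℝ) (hω : 0 < ω)
    (V : ℝ → ℝ) (hV : ∀ x ∈ J, V x = ω^2 / 8 * (x - h x)^2)
    (hV2 : 0 < iteratedDeriv 2 V 0) :
    iteratedDeriv 4 V 0 = 5 * (iteratedDeriv 3 V 0)^2 / (3 * iteratedDeriv 2 V 0) :=
  isochronous_fourth_derivative_condition_general J hJopen h0J h hmaps hsmooth hinv h0 ω V hV hV2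
end
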